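/- Let E = (1/n) Σ_{i,j=1}^n |e_i⟩⟨e_j| ⊗ |e_i⟩⟨e_j| ∈ L(H_n ⊗ H_n) be the projection onto the maximally entangled state. Then ‖E‖_{S(k)} = k/n for all 1 ≤ k ≤ n. -/

import Mathlib

/-!
Write `Ω = ∑ᵢ eᵢ ⊗ eᵢ`, so that `E = n⁻¹ |Ω⟩⟨Ω|` and `⟨w|E|v⟩ = ⟨w|Ω⟩⟨Ω|v⟩ / n`.
A vector of Schmidt rank at most `k` can be written `v = ∑_{s<d} U_s ⊗ b_s` with `(U_s)`
an orthonormal basis of the span of its left factors, so `d ≤ k`. Then `⟨Ω|v⟩ = ∑_s ⟨Ū_s|b_s⟩`, hence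
`|⟨Ω|v⟩| ≤ ∑_s ‖b_s‖ ≤ √d (∑_s ‖b_s‖²)^{1/2} = √d ‖v‖ ≤ √k ‖v‖`, which gives `‖E‖_{S(k)} ≤ k/n`.
Equality holds at `v = w = k^{-1/2} ∑_{t<k} e_t ⊗ e_t`.
-/

noncomputable section
open scoped BigOperators

/-- Inner product (conjugate-linear in the first argument). -/
def ip {ι : Type*} [Fintype ι] (w v : ι → ℂ) : ℂ := ∑ p, star (w p) * v p

/-- Euclidean norm. -/
def nrm {ι : Type*} [Fintype ι] (v : ι → ℂ) : ℝ := Real.sqrt (ip v v).re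

/-- Elementary tensor (product vector). -/
def prodVec {n m : ℕ} (a : Fin n → ℂ) (b : Fin m → ℂ) : Fin n × Fin m → ℂ :=
  fun p => a p.1 * b p.2

/-- Schmidt rank at most `k`: `v` is a sum of `k` product vectors. -/
def SRle {n m : ℕ} (k : ℕ) (v : Fin n × Fin m → ℂ) : Prop :=
  ∃ (a : Fin k → Fin n → ℂ) (b : Fin k → Fin m → ℂ), v = ∑ i, prodVec (a i) (b i)

/-- The `k`-th vector norm. -/
def vecNorm {n m : ℕ} (k : ℕ) (v : Fin n × Fin m → ℂ) : ℝ :=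
  sSup {r | ∃ w, nrm w = 1 ∧ SRle k w ∧ r = ‖ip w v‖}

/-- The `k`-th operator norm. -/
def opNorm {n m : ℕ} (k : ℕ) (X : Matrix (Fin n × Fin m) (Fin n × Fin m) ℂ) : ℝ :=
  sSup {r | ∃ v w, nrm v = 1 ∧ nrm w = 1 ∧ SRle k v ∧ SRle k w ∧
    r = ‖ip w (X.mulVec v)‖}

/-- Rank-one operator `|w⟩⟨v|`. -/
def outer {ι : Type*} (w v : ι → ℂ) : Matrix ι ι ℂ := Matrix.of fun p q => w p * star (v q)

/-- `k`-block positivity. -/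
def BlockPos {n m : ℕ} (k : ℕ) (Y : Matrix (Fin n × Fin m) (Fin n × Fin m) ℂ) : Prop :=
  ∀ v : Fin n × Fin m → ℂ, nrm v = 1 → SRle k v → 0 ≤ (ip v (Y.mulVec v)).re

/-- Schmidt number at most `k`. -/
def SNle {n m : ℕ} (k : ℕ) (ρ : Matrix (Fin n × Fin m) (Fin n × Fin m) ℂ) : Prop :=
  ∃ (N : ℕ) (p : Fin N → ℝ) (v : Fin N → Fin n × Fin m → ℂ),
    (∀ i, 0 ≤ p i) ∧ (∑ i, p i) = 1 ∧ (∀ i, nrm (v i) = 1) ∧ (∀ i, SRle k (v i)) ∧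
    ρ = ∑ i, (p i : ℂ) • outer (v i) (v i)

open Matrix

section InnerProduct

variable {ι : Type*} [Fintype ι]

lemma ip_eq_inner (w v : ι → ℂ) :
    ip w v = inner ℂ (WithLp.toLp 2 w : EuclideanSpace ℂ ι) (WithLp.toLp 2 v) := by
  simp [ip, PiLp.inner_apply, mul_comm]

lemma nrm_eq_norm (v : ι → ℂ) : nrm v = ‖(WithLp.toLp 2 v : EuclideanSpace ℂ ι)‖ := by
  rw [nrm, ip_eq_inner]
  exact (congrArg Real.sqrt (norm_sq_eq_re_inner (𝕜 := ℂ) _).symm).trans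
    (Real.sqrt_sq (norm_nonneg _))

lemma nrm_nonneg (v : ι → ℂ) : 0 ≤ nrm v := Real.sqrt_nonneg _

lemma nrm_sq (v : ι → ℂ) : nrm v ^ 2 = (ip v v).re := by
  rw [nrm_eq_norm, ip_eq_inner]
  exact norm_sq_eq_re_inner (𝕜 := ℂ) _

lemma norm_ip_le (w v : ι → ℂ) : ‖ip w v‖ ≤ nrm w * nrm v := by
  rw [ip_eq_inner, nrm_eq_norm, nrm_eq_norm]
  exact norm_inner_le_norm _ _

lemma star_ip (w v : ι → ℂ) : star (ip w v) = ip v w := by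
  simp [ip, mul_comm]

lemma ip_smul_right (c : ℂ) (w v : ι → ℂ) : ip w (c • v) = c * ip w v := by
  simp only [ip, Pi.smul_apply, smul_eq_mul, Finset.mul_sum]
  exact Finset.sum_congr rfl fun _ _ => by ring

lemma ip_sum_left {κ : Type*} [Fintype κ] (f : κ → ι → ℂ) (v : ι → ℂ) :
    ip (∑ t, f t) v = ∑ t, ip (f t) v := by
  simp only [ip, Finset.sum_apply, star_sum, Finset.sum_mul]
  exact Finset.sum_comm

lemma ip_sum_right {κ : Type*} [Fintype κ] (v : ι → ℂ) (f : κ → ι → ℂ) :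
    ip v (∑ t, f t) = ∑ t, ip v (f t) := by
  simp only [ip, Finset.sum_apply, Finset.mul_sum]
  exact Finset.sum_comm

lemma nrm_smul (c : ℂ) (v : ι → ℂ) : nrm (c • v) = ‖c‖ * nrm v := by
  rw [nrm_eq_norm, nrm_eq_norm, WithLp.toLp_smul, norm_smul]

lemma nrm_star (v : ι → ℂ) : nrm (star v) = nrm v := by
  simp [nrm, ip, mul_comm]

lemma outer_mulVec (x y v : ι → ℂ) : outer x y *ᵥ v = ip y v • x := by
  ext p
  simp only [outer, Matrix.mulVec, dotProduct, Matrix.of_apply, ip, Pi.smul_apply, smul_eq_mul,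
    Finset.sum_mul]
  exact Finset.sum_congr rfl fun _ _ => by ring

end InnerProduct

section Tensor

variable {n m : ℕ}

lemma ip_prodVec (a a' : Fin n → ℂ) (b b' : Fin m → ℂ) :
    ip (prodVec a b) (prodVec a' b') = ip a a' * ip b b' := by
  simp only [ip, prodVec, Finset.sum_mul_sum, Fintype.sum_prod_type, star_mul']
  exact Finset.sum_congr rfl fun _ _ => Finset.sum_congr rfl fun _ _ => by ring

lemma ip_sum_prodVec_of_orthonormal {d : ℕ} {U : Fin d → Fin n → ℂ}
    (hU : Orthonormal ℂ fun s => (WithLp.toLp 2 (U s) : EuclideanSpace ℂ (Fin n)))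
    (b c : Fin d → Fin m → ℂ) :
    ip (∑ s, prodVec (U s) (b s)) (∑ s, prodVec (U s) (c s)) = ∑ s, ip (b s) (c s) := by
  simp only [ip_sum_left, ip_sum_right, ip_prodVec, ip_eq_inner (U _), orthonormal_iff_ite.mp hU,
    ite_mul, one_mul, zero_mul, Finset.sum_ite_eq', Finset.mem_univ, if_true]

lemma nrm_sum_prodVec_sq_of_orthonormal {d : ℕ} {U : Fin d → Fin n → ℂ}
    (hU : Orthonormal ℂ fun s => (WithLp.toLp 2 (U s) : EuclideanSpace ℂ (Fin n)))
    (b : Fin d → Fin m → ℂ) :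
    nrm (∑ s, prodVec (U s) (b s)) ^ 2 = ∑ s, nrm (b s) ^ 2 := by
  simp only [nrm_sq, ip_sum_prodVec_of_orthonormal hU, Complex.re_sum]

lemma SRle.exists_orthonormal {k : ℕ} {v : Fin n × Fin m → ℂ} (hv : SRle k v) :
    ∃ d ≤ k, ∃ (U : Fin d → Fin n → ℂ) (b : Fin d → Fin m → ℂ),
      (Orthonormal ℂ fun s => (WithLp.toLp 2 (U s) : EuclideanSpace ℂ (Fin n))) ∧
      v = ∑ s, prodVec (U s) (b s) := by
  obtain ⟨a, b, rfl⟩ := hv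
  let a' : Fin k → EuclideanSpace ℂ (Fin n) := fun t => WithLp.toLp 2 (a t)
  let S := Submodule.span ℂ (Set.range a')
  let u := stdOrthonormalBasis ℂ S
  have hd : Module.finrank ℂ S ≤ k := by
    simpa [Set.finrank] using finrank_range_le_card (R := ℂ) a'
  let U : Fin (Module.finrank ℂ S) → Fin n → ℂ := fun s => (u s : EuclideanSpace ℂ (Fin n)).ofLp
  have ha : ∀ t, a t = ∑ s, ip (U s) (a t) • U s := by
    intro t
    have h := congrArg (fun x : S => (x : EuclideanSpace ℂ (Fin n)).ofLp)
      (u.sum_repr' ⟨a' t, Submodule.subset_span ⟨t, rfl⟩⟩)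
    simpa [U, ip_eq_inner, a'] using h.symm
  refine ⟨_, hd, U, fun s => ∑ t, ip (U s) (a t) • b t,
    u.orthonormal.comp_linearIsometry S.subtypeₗᵢ, ?_⟩
  funext p
  conv_lhs => rw [Finset.sum_apply]; enter [2, t]; rw [prodVec, ha t]
  simp only [prodVec, Finset.sum_apply, Pi.smul_apply, smul_eq_mul, Finset.sum_mul,
    Finset.mul_sum]
  rw [Finset.sum_comm]
  exact Finset.sum_congr rfl fun _ _ => Finset.sum_congr rfl fun _ _ => by ring

end Tensor

section MaxEnt

variable {n : ℕ}

def maxEntVec (n : ℕ) : Fin n × Fin n → ℂ := fun p => if p.1 = p.2 then 1 else 0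

lemma ip_maxEntVec_prodVec (a b : Fin n → ℂ) :
    ip (maxEntVec n) (prodVec a b) = ip (star a) b := by
  simp [ip, maxEntVec, prodVec, Fintype.sum_prod_type]

lemma norm_ip_maxEntVec_le {k : ℕ} {v : Fin n × Fin n → ℂ} (hv : SRle k v) :
    ‖ip (maxEntVec n) v‖ ≤ √k * nrm v := by
  obtain ⟨d, hd, U, b, hU, rfl⟩ := hv.exists_orthonormal
  have hUnrm : ∀ s, nrm (star (U s)) = 1 := fun s => by
    rw [nrm_star, nrm_eq_norm]
    exact hU.1 s
  calc ‖ip (maxEntVec n) (∑ s, prodVec (U s) (b s))‖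
      = ‖∑ s, ip (star (U s)) (b s)‖ := by simp only [ip_sum_right, ip_maxEntVec_prodVec]
    _ ≤ ∑ s, nrm (b s) := by
        refine (norm_sum_le _ _).trans (Finset.sum_le_sum fun s _ => ?_)
        simpa [hUnrm s] using norm_ip_le (star (U s)) (b s)
    _ ≤ √d * √(∑ s, nrm (b s) ^ 2) := by
        rw [← Real.sqrt_mul (Nat.cast_nonneg d)]
        refine Real.le_sqrt_of_sq_le ?_
        simpa using sq_sum_le_card_mul_sum_sq (s := Finset.univ) (f := fun s => nrm (b s))
    _ ≤ √k * nrm (∑ s, prodVec (U s) (b s)) := by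
        rw [← nrm_sum_prodVec_sq_of_orthonormal hU, Real.sqrt_sq (nrm_nonneg _)]
        exact mul_le_mul_of_nonneg_right (Real.sqrt_le_sqrt (by exact_mod_cast hd)) (nrm_nonneg _)

lemma maxEntProj_eq_smul_outer :
    (Matrix.of fun p q : Fin n × Fin n => if p.1 = p.2 ∧ q.1 = q.2 then (1 : ℂ) / n else 0) =
      (1 / n : ℂ) • outer (maxEntVec n) (maxEntVec n) := by
  ext p q
  by_cases hp : p.1 = p.2 <;> by_cases hq : q.1 = q.2 <;> simp [outer, maxEntVec, hp, hq]

lemma exists_srle_ip_maxEntVec_eq_sqrt {k : ℕ} (hk : 1 ≤ k) (hkn : k ≤ n) :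
    ∃ v, nrm v = 1 ∧ SRle k v ∧ ip (maxEntVec n) v = √k := by
  let e : Fin k → Fin n → ℂ := fun t => Pi.single (Fin.castLE hkn t) 1
  have he : Orthonormal ℂ fun t => (WithLp.toLp 2 (e t) : EuclideanSpace ℂ (Fin n)) :=
    EuclideanSpace.orthonormal_single.comp _ (Fin.castLE_injective hkn)
  let c : ℂ := ((√k)⁻¹ : ℝ)
  have hk0 : (0 : ℝ) < k := by exact_mod_cast hk
  have hee : ∀ t, ip (e t) (e t) = 1 := fun t => by
    rw [ip_eq_inner, orthonormal_iff_ite.mp he, if_pos rfl]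
  have hstar : ∀ t, star (e t) = e t := fun t => by simp [e]
  refine ⟨∑ t, prodVec (e t) (c • e t), ?_, ⟨e, fun t => c • e t, rfl⟩, ?_⟩
  · have hce : ∀ t, nrm (c • e t) ^ 2 = (k : ℝ)⁻¹ := fun t => by
      rw [nrm_smul, nrm_eq_norm, he.1 t]
      simp [c, hk0.le]
    rw [← pow_eq_one_iff_of_nonneg (nrm_nonneg _) two_ne_zero,
      nrm_sum_prodVec_sq_of_orthonormal he]
    simp [hce, hk0.ne']
  · simp only [ip_sum_right, ip_maxEntVec_prodVec, ip_smul_right, hstar, hee]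
    simp only [c, Finset.sum_const, Finset.card_univ, Fintype.card_fin, nsmul_eq_mul, mul_one]
    exact_mod_cast Real.div_sqrt

lemma norm_ip_maxEntProj_mulVec (w v : Fin n × Fin n → ℂ) :
    ‖ip w ((Matrix.of fun p q : Fin n × Fin n =>
        if p.1 = p.2 ∧ q.1 = q.2 then (1 : ℂ) / n else 0) *ᵥ v)‖ =
      ‖ip (maxEntVec n) w‖ * ‖ip (maxEntVec n) v‖ / n := by
  rw [maxEntProj_eq_smul_outer, smul_mulVec, outer_mulVec, smul_smul, ip_smul_right,
    ← star_ip (maxEntVec n) w]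
  simp [div_eq_inv_mul, mul_comm, mul_left_comm]

end MaxEnt

/-- the k-th operator norm of the maximally entangled projection
`E = (1/n) Σ_{i,j} |e_i⟩⟨e_j| ⊗ |e_i⟩⟨e_j|` equals `k/n`. -/
theorem stmt4 {n k : ℕ} (hk1 : 1 ≤ k) (hkn : k ≤ n) :
    opNorm k (Matrix.of fun p q : Fin n × Fin n =>
      if p.1 = p.2 ∧ q.1 = q.2 then (1 : ℂ) / n else 0) = (k : ℝ) / n := by
  obtain ⟨v₀, hv₀, hv₀k, hΩv₀⟩ := exists_srle_ip_maxEntVec_eq_sqrt hk1 hkn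
  refine IsGreatest.csSup_eq ⟨⟨v₀, v₀, hv₀, hv₀, hv₀k, hv₀k, ?_⟩, ?_⟩
  · rw [norm_ip_maxEntProj_mulVec, hΩv₀, Complex.norm_real,
      Real.norm_of_nonneg (Real.sqrt_nonneg _), Real.mul_self_sqrt (Nat.cast_nonneg k)]
  · rintro r ⟨v, w, hv, hw, hvk, hwk, rfl⟩
    have hwΩ := norm_ip_maxEntVec_le hwk
    have hvΩ := norm_ip_maxEntVec_le hvk
    rw [hw, mul_one] at hwΩ
    rw [hv, mul_one] at hvΩ
    rw [norm_ip_maxEntProj_mulVec, ← Real.mul_self_sqrt (Nat.cast_nonneg k)]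
    gcongr
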